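/- arXiv:2202.09087 — 6 statements merged into one kernel-verified Lean document; each statement's English description precedes it below -/
import Mathlib

section
/- Fix reals b, c, d with (b,c,d) ≠ (0,0,0) and d ≥ b². Define m(τ) = τ(|b + 2τc| + √((b + 2τc)² + d)) for τ ≥ 0. Then m is strictly increasing on [0,∞). -/
/-!
Write `u = b + 2τc` and `S = √(u² + d)`. Since `m` is unchanged under `(b, c) ↦ (-b, -c)`, at a
point with `u ≠ 0` we may assume `u > 0`; there `m τ = τ (u + S)` nearby and, using `2τc = u - b`,
`m' = (u + S)(S + u - b) / S`, which is positive because `S ≥ |b|` by `d ≥ b²`. So `m' > 0` off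
the at most one zero of `u`, and continuity bridges that point: `m` is strictly increasing on all
of `ℝ`. If `b = c = 0`, then `m τ = τ √d` with `d > 0`.
-/

open Real Filter Topology

noncomputable def m (b c d τ : ℝ) : ℝ := τ * (|b + 2 * τ * c| + √((b + 2 * τ * c) ^ 2 + d))

lemma m_neg (b c d : ℝ) : m (-b) (-c) d = m b c d := by
  funext τ
  have hu : -b + 2 * τ * -c = -(b + 2 * τ * c) := by ring
  simp only [m, hu, abs_neg, neg_sq]

lemma continuous_m (b c d : ℝ) : Continuous (m b c d) := by
  unfold m
  fun_prop

lemma m_eventuallyEq {b c d x : ℝ} (hu : 0 < b + 2 * x * c) :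
    m b c d =ᶠ[𝓝 x] fun τ => τ * (b + 2 * τ * c + √((b + 2 * τ * c) ^ 2 + d)) := by
  have hpos : ∀ᶠ τ in 𝓝 x, 0 < b + 2 * τ * c :=
    continuousAt_const.eventually_lt (by fun_prop) hu
  filter_upwards [hpos] with τ hτ
  rw [m, abs_of_pos hτ]

lemma deriv_m_pos_of_pos {b c d x : ℝ} (hd : b ^ 2 ≤ d) (hu : 0 < b + 2 * x * c) :
    0 < deriv (m b c d) x := by
  set u := b + 2 * x * c with hu_def
  set S := √(u ^ 2 + d)
  have hv : 0 < u ^ 2 + d := by nlinarith [sq_nonneg b]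
  have hS : 0 < S := sqrt_pos.2 hv
  have hbS : b ≤ S := (le_abs_self b).trans (abs_le_sqrt (by nlinarith [sq_nonneg u]))
  have hlin : HasDerivAt (fun τ => b + 2 * τ * c) (2 * c) x := by
    simpa using ((hasDerivAt_id x).const_mul 2).mul_const c |>.const_add b
  have hsqrt : HasDerivAt (fun τ => √((b + 2 * τ * c) ^ 2 + d))
      (2 * u ^ 1 * (2 * c) / (2 * S)) x :=
    ((hlin.pow 2).add_const d).sqrt hv.ne'
  have hm : HasDerivAt (m b c d) ((u + S) * (S + u - b) / S) x := by
    refine (((hasDerivAt_id x).mul (hlin.add hsqrt)).congr_of_eventuallyEq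
      (m_eventuallyEq hu)).congr_deriv ?_
    simp only [Pi.add_apply, id]
    rw [hu_def]
    field_simp
    ring
  rw [hm.deriv]
  exact div_pos (mul_pos (by linarith) (by linarith)) hS

lemma deriv_m_pos {b c d x : ℝ} (hd : b ^ 2 ≤ d) (hu : b + 2 * x * c ≠ 0) :
    0 < deriv (m b c d) x := by
  rcases hu.lt_or_gt with hneg | hpos
  · rw [← m_neg]
    exact deriv_m_pos_of_pos (by rwa [neg_sq]) (by linarith)
  · exact deriv_m_pos_of_pos hd hpos

lemma strictMono_of_deriv_pos_of_ne {f : ℝ → ℝ} {a : ℝ} (hf : Continuous f)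
    (hf' : ∀ x ≠ a, 0 < deriv f x) : StrictMono f :=
  StrictMonoOn.Iic_union_Ici
    (strictMonoOn_of_deriv_pos (convex_Iic a) hf.continuousOn fun x hx =>
      hf' x (by rw [interior_Iic] at hx; exact hx.ne))
    (strictMonoOn_of_deriv_pos (convex_Ici a) hf.continuousOn fun x hx =>
      hf' x (by rw [interior_Ici] at hx; exact hx.ne'))

lemma exists_forall_ne_add_mul_ne_zero {b c : ℝ} (hbc : ¬(b = 0 ∧ c = 0)) :
    ∃ a, ∀ x ≠ a, b + 2 * x * c ≠ 0 := by
  by_cases hc : c = 0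
  · exact ⟨0, fun x _ => by simpa [hc] using fun hb => hbc ⟨hb, hc⟩⟩
  · refine ⟨-b / (2 * c), fun x hx h => hx ?_⟩
    field_simp
    linarith

lemma m_strictMono {b c d : ℝ} (hne : (b, c, d) ≠ (0, 0, 0)) (hd : b ^ 2 ≤ d) :
    StrictMono (m b c d) := by
  by_cases hbc : b = 0 ∧ c = 0
  · obtain ⟨rfl, rfl⟩ := hbc
    have hd0 : 0 < d := (by simpa using hd : 0 ≤ d).lt_of_ne fun h => hne (by rw [← h])
    have hm : m 0 0 d = fun τ => τ * √d := by
      funext τ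
      simp [m]
    rw [hm]
    exact strictMono_mul_right_of_pos (sqrt_pos.2 hd0)
  · obtain ⟨a, ha⟩ := exists_forall_ne_add_mul_ne_zero hbc
    exact strictMono_of_deriv_pos_of_ne (continuous_m b c d) fun x hx => deriv_m_pos hd (ha x hx)

theorem m_strictMonoOn (b c d : ℝ) (hne : (b, c, d) ≠ (0, 0, 0)) (hd : d ≥ b^2) :
    StrictMonoOn (fun τ : ℝ => τ * (|b + 2*τ*c| + Real.sqrt ((b + 2*τ*c)^2 + d)))
      (Set.Ici 0) :=
  (m_strictMono hne hd).strictMonoOn _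
end

section
/- Fix reals b, c with σ := sign(b + 2τc) = -sign(c) at some τ > 0, and d ≥ 0 with B(τ) := d + b² + 4bcτ ≥ 0. Then 1 + 2στc/A(τ) ≥ B(τ)/(8c²τ² + 2B(τ)) ≥ 0, where A(τ) = √((b + 2τc)² + d) and c ≠ 0. -/
open Real

theorem key_inequality_for_monotonicity (b c d τ σ : ℝ)
    (hτ : 0 < τ) (hc : c ≠ 0) (hd : 0 ≤ d)
    (hσ : σ = 1 ∨ σ = -1)
    (hsign : σ * (b + 2*τ*c) = |b + 2*τ*c|)
    (hsc : σ * c ≤ 0)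
    (hB : 0 ≤ d + b^2 + 4*b*c*τ)
    (hApos : 0 < Real.sqrt ((b + 2*τ*c)^2 + d)) :
    1 + 2*σ*τ*c / Real.sqrt ((b + 2*τ*c)^2 + d) ≥
      (d + b^2 + 4*b*c*τ) / (8*c^2*τ^2 + 2*(d + b^2 + 4*b*c*τ)) ∧
    (d + b^2 + 4*b*c*τ) / (8*c^2*τ^2 + 2*(d + b^2 + 4*b*c*τ)) ≥ 0 := by
  set A := Real.sqrt ((b + 2*τ*c)^2 + d) with hAdef
  have hA2 : A^2 = (b + 2*τ*c)^2 + d := Real.sq_sqrt (by positivity)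
  have hσ2 : σ^2 = 1 := by rcases hσ with h | h <;> simp [h]
  have hstc : 0 ≤ -(2*σ*τ*c) := by nlinarith
  have hden : 0 < 8*c^2*τ^2 + 2*(d + b^2 + 4*b*c*τ) := by nlinarith
  have hAge : -(2*σ*τ*c) ≤ A := by nlinarith [sq_nonneg (A - (-(2*σ*τ*c)))]
  constructor
  · have heq : 1 + 2*σ*τ*c / A = (A + 2*σ*τ*c) / A := by field_simp
    rw [ge_iff_le, heq, div_le_div_iff₀ hden hApos]
    have ht2 : (2*σ*τ*c)^2 = 4*τ^2*c^2 := by linear_combination (4*τ^2*c^2) * hσ2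
    nlinarith [mul_nonneg hApos.le (sq_nonneg (A + 2*σ*τ*c)), ht2, hA2]
  · exact div_nonneg hB hden.le
end

section
/- Let μ > 0, let F ∈ L∞(S) with ‖F‖_∞ < μ/(2π), let φ ≠ 0 be real, and define Φ(x) = (π/μ)|φ|F(x) + φ/2 and τ*(x) = 1/2 + (π/μ)F(x)·sign(φ). Then τ*(x) ∈ (0,1) for a.e. x and (1/(2π)) ∫₀^{2π} ∫₀¹ |Φ(x) - φτ| dτ dx = |φ|·(π²/μ² · ⟨F²⟩ + 1/4), where ⟨F²⟩ = (1/(2π))∫₀^{2π} F(x)² dx. -/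
/-!
Since `φ * sign φ = |φ|`, the integrand factors as `|Φ(x) - φ τ| = |φ| |τ*(x) - τ|`, and the
bound on `F` puts `τ*(x)` strictly inside `(0, 1)`. Splitting the `τ`-integral at `τ*(x)` gives
`∫₀¹ |c - τ| dτ = (c² + (1 - c)²) / 2 = (c - 1/2)² + 1/4`, and `(τ*(x) - 1/2)² = (π/μ)² F(x)²`
wherever it is multiplied by `|φ|`. Integrating in `x` is then linear, `F²` being integrable
as the product of an integrable and a bounded function.
-/

open Real MeasureTheory intervalIntegral

namespace Real

theorem self_mul_sign (r : ℝ) : r * sign r = |r| := by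
  rcases lt_trichotomy r 0 with h | rfl | h
  · simp [sign_of_neg h, abs_of_neg h]
  · simp
  · simp [sign_of_pos h, abs_of_pos h]

theorem abs_mul_sign_sq (r : ℝ) : |r| * sign r ^ 2 = |r| := by
  rcases lt_trichotomy r 0 with h | rfl | h
  · simp [sign_of_neg h]
  · simp
  · simp [sign_of_pos h]

theorem abs_sign_le_one (r : ℝ) : |sign r| ≤ 1 := by
  rcases sign_apply_eq r with h | h | h <;> simp [h]

end Real

theorem integral_abs_sub_of_mem_Icc {a b c : ℝ} (hc : c ∈ Set.Icc a b) :
    ∫ τ in a..b, |c - τ| = ((c - a) ^ 2 + (b - c) ^ 2) / 2 := by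
  have hint : ∀ u v : ℝ, IntervalIntegrable (fun τ => |c - τ|) volume u v := fun u v =>
    (continuous_const.sub continuous_id).abs.intervalIntegrable u v
  have below : ∫ τ in a..c, |c - τ| = ∫ τ in a..c, (c - τ) := by
    refine integral_congr fun τ hτ => abs_of_nonneg ?_
    rw [Set.uIcc_of_le hc.1] at hτ
    linarith [hτ.2]
  have above : ∫ τ in c..b, |c - τ| = ∫ τ in c..b, (τ - c) := by
    refine integral_congr fun τ hτ => abs_sub_comm c τ ▸ abs_of_nonneg ?_
    rw [Set.uIcc_of_le hc.2] at hτ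
    linarith [hτ.1]
  rw [← integral_add_adjacent_intervals (hint a c) (hint c b), below, above,
    integral_sub intervalIntegrable_const intervalIntegral.intervalIntegrable_id,
    integral_sub intervalIntegral.intervalIntegrable_id intervalIntegrable_const]
  simp only [intervalIntegral.integral_const, integral_id, smul_eq_mul]
  ring

theorem half_add_mul_sign_mem_Ioo {t : ℝ} (ht : |t| < 1 / 2) (φ : ℝ) :
    1 / 2 + t * sign φ ∈ Set.Ioo (0 : ℝ) 1 := by
  have hts : |t * sign φ| < 1 / 2 := by
    rw [abs_mul]
    exact (mul_le_of_le_one_right (abs_nonneg t) (abs_sign_le_one φ)).trans_lt ht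
  constructor <;> linarith [abs_lt.mp hts]

theorem integral_abs_mul_abs_add_half_sub_mul {t : ℝ} (ht : |t| < 1 / 2) (φ : ℝ) :
    ∫ τ in (0 : ℝ)..1, |t * |φ| + φ / 2 - φ * τ| = |φ| * (t ^ 2 + 1 / 4) := by
  have hc := half_add_mul_sign_mem_Ioo ht φ
  have factor : ∀ τ : ℝ,
      |t * |φ| + φ / 2 - φ * τ| = |φ| * |1 / 2 + t * sign φ - τ| := fun τ => by
    rw [← abs_mul, ← Real.self_mul_sign φ]
    ring_nf
  simp_rw [factor]
  rw [intervalIntegral.integral_const_mul, integral_abs_sub_of_mem_Icc (Set.Ioo_subset_Icc_self hc)]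
  linear_combination t ^ 2 * abs_mul_sign_sq φ

theorem tau_star_in_unit_interval_and_integral_general (μ φ : ℝ) (F : ℝ → ℝ)
    (hμ : 0 < μ)
    (hF : ∀ x, |F x| < μ / (2*π))
    (hFint : IntegrableOn F (Set.Icc 0 (2*π))) :
    (∀ x, (1/2 + (π/μ) * F x * Real.sign φ) ∈ Set.Ioo (0:ℝ) 1) ∧
    (1/(2*π)) * ∫ x in (0:ℝ)..(2*π), ∫ τ in (0:ℝ)..1,
        |((π/μ) * |φ| * F x + φ/2) - φ * τ| =
      |φ| * (π^2/μ^2 * ((1/(2*π)) * ∫ x in (0:ℝ)..(2*π), (F x)^2) + 1/4) := by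
  have hπμ : 0 < π / μ := div_pos pi_pos hμ
  have hbound : ∀ x, |π / μ * F x| < 1 / 2 := fun x => by
    rw [abs_mul, abs_of_pos hπμ]
    calc π / μ * |F x| < π / μ * (μ / (2 * π)) := mul_lt_mul_of_pos_left (hF x) hπμ
      _ = 1 / 2 := by field_simp
  refine ⟨fun x => half_add_mul_sign_mem_Ioo (hbound x) φ, ?_⟩
  have hF2 : IntervalIntegrable (fun x => F x ^ 2) volume 0 (2 * π) := by
    rw [intervalIntegrable_iff_integrableOn_Icc_of_le (by positivity)]
    simp only [sq]
    exact hFint.mul_bdd hFint.aestronglyMeasurable (ae_of_all _ fun x => (hF x).le)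
  simp_rw [mul_right_comm (π / μ) |φ|]
  rw [integral_congr fun x _ => integral_abs_mul_abs_add_half_sub_mul (hbound x) φ,
    intervalIntegral.integral_const_mul]
  simp_rw [mul_pow]
  rw [integral_add (hF2.const_mul _) intervalIntegrable_const, intervalIntegral.integral_const_mul,
    intervalIntegral.integral_const, smul_eq_mul]
  field_simp
  ring

theorem tau_star_in_unit_interval_and_integral (μ φ : ℝ) (F : ℝ → ℝ)
    (hμ : 0 < μ) (hφ : φ ≠ 0)
    (hF : ∀ x, |F x| < μ / (2*π))
    (hFmeas : Measurable F)
    (hFint : IntegrableOn F (Set.Icc 0 (2*π))) :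
    (∀ x, (1/2 + (π/μ) * F x * Real.sign φ) ∈ Set.Ioo (0:ℝ) 1) ∧
    (1/(2*π)) * ∫ x in (0:ℝ)..(2*π), ∫ τ in (0:ℝ)..1,
        |((π/μ) * |φ| * F x + φ/2) - φ * τ| =
      |φ| * (π^2/μ^2 * ((1/(2*π)) * ∫ x in (0:ℝ)..(2*π), (F x)^2) + 1/4) :=
  tau_star_in_unit_interval_and_integral_general μ φ F hμ hF hFint
end

section
/- Let F̄ = ⟨F⟩, f ∈ ℝ, T > 0, σ ∈ {-1,1} with σ = sign(2f + T·F̄) (or σ arbitrary if 2f + T·F̄ = 0), and suppose T ≥ 2πσF̄. Define F̄' = F̄ + σ and f' = f - 2π(F̄ + σ/2). Then 2|2f' + (T+2π)F̄'| = 2|2f + T·F̄| + 2(T - 2πσF̄). -/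
open Real

theorem period_identity_abs (Fbar f T σ : ℝ)
    (hσ : σ = 1 ∨ σ = -1)
    (hsign : σ * (2*f + T*Fbar) = |2*f + T*Fbar|)
    (hT : T ≥ 2*π*σ*Fbar) :
    2 * |2*(f - 2*π*(Fbar + σ/2)) + (T + 2*π)*(Fbar + σ)| =
      2 * |2*f + T*Fbar| + 2*(T - 2*π*σ*Fbar) := by
  have hσ2 : σ * σ = 1 := by rcases hσ with h | h <;> rw [h] <;> ring
  set X := 2*(f - 2*π*(Fbar + σ/2)) + (T + 2*π)*(Fbar + σ) with hX
  have hσX : σ * X = |2*f + T*Fbar| + (T - 2*π*σ*Fbar) := by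
    have : σ * X = σ * (2*f + T*Fbar) + (T - 2*π*σ*Fbar) := by
      rw [hX]; linear_combination T * hσ2
    rw [this, hsign]
  have hnn : 0 ≤ σ * X := by
    rw [hσX]
    have := abs_nonneg (2*f + T*Fbar)
    linarith
  have habs : |X| = σ * X := by
    rcases hσ with h | h
    · rw [h] at hnn ⊢; simpa using abs_of_nonneg (by linarith : (0:ℝ) ≤ X)
    · rw [h] at hnn ⊢
      have : X ≤ 0 := by linarith
      rw [abs_of_nonpos this]; ring
  rw [habs, hσX]; ring
end

section
/- Let T, T' > 0, F̄ ∈ ℝ, f, f' ∈ ℝ, E, E' ≥ 0 with E ≥ F̄² and E' ≥ (F̄+σ)² for σ ∈ {-1,1}, σ = sign(2f + TF̄), T ≥ 2πσF̄, and suppose 2|2f + TF̄| = T²/(2π) - 2πE. With F̄' = F̄ + σ, f' = f - 2π(F̄ + σ/2), E' = E + 2σF̄ + 1, the number T + 2π satisfies 2|2f' + (T+2π)F̄'| = (T+2π)²/(2π) - 2πE'. -/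
open Real

theorem T1_increases_by_period (T Fbar f E : ℝ) (σ : ℝ)
    (hT : 0 < T)
    (hσ : σ = 1 ∨ σ = -1)
    (hsign : σ * (2*f + T*Fbar) = |2*f + T*Fbar|)
    (hTge : T ≥ 2*π*σ*Fbar)
    (hE : E ≥ Fbar^2)
    (hE' : E + 2*σ*Fbar + 1 ≥ (Fbar + σ)^2)
    (heq : 2 * |2*f + T*Fbar| = T^2 / (2*π) - 2*π*E) :
    2 * |2*(f - 2*π*(Fbar + σ/2)) + (T + 2*π)*(Fbar + σ)| =
      (T + 2*π)^2 / (2*π) - 2*π*(E + 2*σ*Fbar + 1) := by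
  have hπ : (0:ℝ) < π := Real.pi_pos
  have habs : (0:ℝ) ≤ |2*f + T*Fbar| := abs_nonneg _
  rcases hσ with h1 | h1 <;> subst h1
  · have harg : 2*(f - 2*π*(Fbar + 1/2)) + (T + 2*π)*(Fbar + 1) =
        (2*f + T*Fbar) + (T - 2*π*1*Fbar) := by ring
    rw [harg, abs_of_nonneg (by nlinarith [hsign, hTge])]
    have heq2 : 2 * |2*f + T*Fbar| * (2*π) = T^2 - 2*π*(2*π*E) := by
      field_simp at heq ⊢; linarith
    field_simp
    nlinarith [heq2, hsign]
  · have harg : 2*(f - 2*π*(Fbar + (-1)/2)) + (T + 2*π)*(Fbar + (-1)) =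
        (2*f + T*Fbar) - (T - 2*π*(-1)*Fbar) := by ring
    rw [harg, abs_sub_comm, abs_of_nonneg (by nlinarith [hsign, hTge])]
    have heq2 : 2 * |2*f + T*Fbar| * (2*π) = T^2 - 2*π*(2*π*E) := by
      field_simp at heq ⊢; linarith
    field_simp
    nlinarith [heq2, hsign]
end

section
/- Let Φ₁ be a 2π-periodic integrable function on ℝ, φ₁ ∈ ℝ, T ≥ 2π, and N = ⌊T/(2π)⌋. Then |(1/T)∫₀^T |Φ₁(s) - φ₁ s/T| ds - (1/(2π))∫₀¹∫₀^{2π} |Φ₁(x) - φ₁τ| dx dτ| ≤ (5/T)(∫₀^{2π}|Φ₁(x)|dx + 2π|φ₁|). -/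
open Real MeasureTheory intervalIntegral

set_option maxHeartbeats 2000000 in
theorem support_function_convergence_rate (Φ₁ : ℝ → ℝ) (φ₁ T : ℝ)
    (hper : ∀ s, Φ₁ (s + 2*π) = Φ₁ s)
    (hint : IntegrableOn Φ₁ (Set.Icc 0 (2*π)))
    (hT : T ≥ 2*π) :
    |(1/T) * (∫ s in (0:ℝ)..T, |Φ₁ s - φ₁ * s / T|) -
        (1/(2*π)) * ∫ τ in (0:ℝ)..1, ∫ x in (0:ℝ)..(2*π), abs (Φ₁ x - φ₁ * τ)| ≤
      (5/T) * ((∫ x in (0:ℝ)..(2*π), |Φ₁ x|) + 2*π*|φ₁|) := by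
  have hπ : (0:ℝ) < 2*π := by positivity
  have hT0 : (0:ℝ) < T := lt_of_lt_of_le hπ hT
  have hper' : Function.Periodic Φ₁ (2*π) := hper
  have hΦ0 : IntervalIntegrable Φ₁ volume 0 (2*π) := by
    rw [intervalIntegrable_iff_integrableOn_Icc_of_le hπ.le]; exact hint
  have hΦk : ∀ k : ℕ, IntervalIntegrable Φ₁ volume (2*π*k) (2*π*k + 2*π) := by
    intro k
    have h1 := hΦ0.comp_sub_right (2*π*k)
    have h2 : (fun x => Φ₁ (x - 2*π*k)) = Φ₁ := by
      funext x
      have h3 := (hper'.nat_mul k) (x - 2*π*k)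
      have h4 : x - 2*π*k + k*(2*π) = x := by push_cast; ring
      rw [h4] at h3
      exact h3.symm
    rw [h2] at h1
    rw [show (0:ℝ) + 2*π*k = 2*π*k by ring, show 2*π + 2*π*(k:ℝ) = 2*π*k + 2*π by ring] at h1
    exact h1
  have hΦ0m : ∀ m : ℕ, IntervalIntegrable Φ₁ volume 0 (2*π*m) := by
    intro m; induction m with
    | zero => simp
    | succ m ih =>
      have h5 := ih.trans (hΦk m)
      have he : 2*π*m + 2*π = 2*π*((m+1:ℕ):ℝ) := by push_cast; ring
      rwa [he] at h5
  set N : ℕ := ⌊T / (2*π)⌋₊ with hNdef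
  have hN1 : 1 ≤ N := by
    rw [hNdef]
    apply Nat.le_floor
    rw [Nat.cast_one, le_div_iff₀ hπ]
    linarith
  have hNT : 2*π*(N:ℝ) ≤ T := by
    have h6 := Nat.floor_le (show (0:ℝ) ≤ T/(2*π) from by positivity)
    rw [← hNdef] at h6
    calc 2*π*(N:ℝ) ≤ 2*π*(T/(2*π)) := by nlinarith
    _ = T := by field_simp
  have hTN1 : T ≤ 2*π*((N:ℝ)+1) := by
    have h7 := (Nat.lt_floor_add_one (T/(2*π))).le
    rw [← hNdef] at h7
    calc T = 2*π*(T/(2*π)) := by field_simp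
    _ ≤ 2*π*((N:ℝ)+1) := by nlinarith
  have hΦsub : ∀ a b : ℝ, 0 ≤ a → a ≤ b → b ≤ 2*π*((N:ℝ)+1) → IntervalIntegrable Φ₁ volume a b := by
    intro a b ha hab hb
    apply (hΦ0m (N+1)).mono_set
    rw [Set.uIcc_of_le hab, Set.uIcc_of_le (by positivity)]
    apply Set.Icc_subset_Icc ha
    rwa [show (2*π*((N+1:ℕ):ℝ)) = 2*π*((N:ℝ)+1) by push_cast; ring]
  have hlin : Continuous fun s : ℝ => φ₁ * s / T := by fun_prop
  have hFi : ∀ a b : ℝ, 0 ≤ a → a ≤ b → b ≤ 2*π*((N:ℝ)+1) →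
      IntervalIntegrable (fun s => |Φ₁ s - φ₁ * s / T|) volume a b := by
    intro a b ha hab hb
    exact ((hΦsub a b ha hab hb).sub (hlin.intervalIntegrable a b)).abs
  set g : ℝ → ℝ := fun τ => ∫ x in (0:ℝ)..(2*π), |Φ₁ x - φ₁ * τ| with hgdef
  have hgi : ∀ τ : ℝ, IntervalIntegrable (fun x => |Φ₁ x - φ₁ * τ|) volume 0 (2*π) :=
    fun τ => (hΦ0.sub intervalIntegrable_const).abs
  have gLip : ∀ τ σ : ℝ, |g τ - g σ| ≤ 2*π*|φ₁| * |τ - σ| := by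
    intro τ σ
    have h8 : g τ - g σ = ∫ x in (0:ℝ)..(2*π), (|Φ₁ x - φ₁ * τ| - |Φ₁ x - φ₁ * σ|) :=
      (integral_sub (hgi τ) (hgi σ)).symm
    rw [h8]
    have h9 : ∀ x ∈ Set.uIoc (0:ℝ) (2*π), ‖|Φ₁ x - φ₁ * τ| - |Φ₁ x - φ₁ * σ|‖ ≤ |φ₁| * |τ - σ| := by
      intro x _
      rw [Real.norm_eq_abs]
      have h9a := abs_abs_sub_abs_le_abs_sub (Φ₁ x - φ₁ * τ) (Φ₁ x - φ₁ * σ)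
      have h9b : Φ₁ x - φ₁ * τ - (Φ₁ x - φ₁ * σ) = φ₁ * (σ - τ) := by ring
      rw [h9b, abs_mul, abs_sub_comm σ τ] at h9a
      exact h9a
    rw [← Real.norm_eq_abs]
    refine (norm_integral_le_of_norm_le_const h9).trans (le_of_eq ?_)
    rw [sub_zero, abs_of_pos hπ]; ring
  have gCont : Continuous g := by
    apply LipschitzWith.continuous (K := ⟨2*π*|φ₁|, by positivity⟩)
    apply LipschitzWith.of_dist_le_mul
    intro τ σ
    rw [Real.dist_eq, Real.dist_eq]; exact gLip τ σ
  have gNonneg : ∀ τ : ℝ, 0 ≤ g τ := by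
    intro τ
    exact intervalIntegral.integral_nonneg hπ.le (fun x _ => abs_nonneg _)
  have gzero : g 0 = ∫ x in (0:ℝ)..(2*π), |Φ₁ x| := by simp [hgdef]
  have gBound : ∀ τ : ℝ, 0 ≤ τ → τ ≤ 1 → g τ ≤ (∫ x in (0:ℝ)..(2*π), |Φ₁ x|) + 2*π*|φ₁| := by
    intro τ h0 h1
    have h10 := gLip τ 0
    rw [sub_zero, abs_of_nonneg h0] at h10
    have h11 : g τ - g 0 ≤ 2*π*|φ₁| * τ := (le_abs_self _).trans h10
    have h12 : 2*π*|φ₁| * τ ≤ 2*π*|φ₁| := by nlinarith [mul_nonneg (mul_nonneg hπ.le (abs_nonneg φ₁)) (sub_nonneg.mpr h1)]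
    linarith [gzero ▸ h11]
  have hA0 : (0:ℝ) ≤ 2*π*(N:ℝ) := by positivity
  have hTle : T ≤ 2*π*(N:ℝ) + 2*π := by linarith
  have habs_per : Function.Periodic (fun s => |Φ₁ s|) (2*π) := fun s => by simp [hper s]
  have hFint2 : IntervalIntegrable (fun s => |Φ₁ s - φ₁ * s / T|) volume (2*π*(N:ℝ)) T :=
    hFi (2*π*(N:ℝ)) T hA0 hNT hTN1
  have hsA : abs (∫ s in (2*π*(N:ℝ))..T, |Φ₁ s - φ₁ * s / T|) ≤
      (∫ x in (0:ℝ)..(2*π), |Φ₁ x|) + 2*π*|φ₁| := by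
    rw [abs_of_nonneg (intervalIntegral.integral_nonneg hNT (fun x _ => abs_nonneg _))]
    calc ∫ s in (2*π*(N:ℝ))..T, |Φ₁ s - φ₁ * s / T|
        ≤ ∫ s in (2*π*(N:ℝ))..T, (|Φ₁ s| + |φ₁|) := by
          have hig : IntervalIntegrable (fun u => |Φ₁ u| + |φ₁|) volume (2*π*(N:ℝ)) T := by
            apply IntervalIntegrable.add _ intervalIntegrable_const
            apply (hΦk N).abs.mono_set
            rw [Set.uIcc_of_le hNT, Set.uIcc_of_le (by linarith : 2*π*(N:ℝ) ≤ 2*π*(N:ℝ)+2*π)]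
            exact Set.Icc_subset_Icc le_rfl hTle
          apply intervalIntegral.integral_mono_on hNT hFint2 hig
          intro s hs
          have hs0 : 0 ≤ s := le_trans hA0 hs.1
          have hsT : s ≤ T := hs.2
          have hb : |φ₁ * s / T| ≤ |φ₁| := by
            rw [abs_div, abs_mul, abs_of_pos hT0, abs_of_nonneg hs0, div_le_iff₀ hT0]
            nlinarith [abs_nonneg φ₁]
          calc |Φ₁ s - φ₁ * s / T| ≤ |Φ₁ s| + |φ₁ * s / T| := abs_sub _ _
          _ ≤ |Φ₁ s| + |φ₁| := by linarith
      _ ≤ ∫ s in (2*π*(N:ℝ))..(2*π*(N:ℝ)+2*π), (|Φ₁ s| + |φ₁|) := by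
          apply intervalIntegral.integral_mono_interval le_rfl hNT hTle
          · filter_upwards with s
            positivity
          · exact (hΦk N).abs.add intervalIntegrable_const
      _ = (∫ x in (0:ℝ)..(2*π), |Φ₁ x|) + 2*π*|φ₁| := by
          rw [intervalIntegral.integral_add (hΦk N).abs intervalIntegrable_const,
            intervalIntegral.integral_const]
          have h13 := habs_per.intervalIntegral_add_eq (2*π*(N:ℝ)) 0
          rw [zero_add] at h13
          rw [h13, smul_eq_mul]
          ring
  have hcast : ∀ k : ℕ, 2*π*(((k+1):ℕ):ℝ) = 2*π*(k:ℝ)+2*π := by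
    intro k; push_cast; ring
  have hints : ∀ k : ℕ, k < N → IntervalIntegrable (fun s => |Φ₁ s - φ₁ * s / T|) volume
      (2*π*(k:ℝ)) (2*π*(((k+1):ℕ):ℝ)) := by
    intro k hk
    apply hFi
    · positivity
    · have : (k:ℝ) ≤ ((k+1:ℕ):ℝ) := by push_cast; linarith
      nlinarith
    · have : ((k+1:ℕ):ℝ) ≤ (N:ℝ) := by exact_mod_cast Nat.succ_le_of_lt hk
      nlinarith
  have hsum1 := intervalIntegral.sum_integral_adjacent_intervals
    (a := fun k : ℕ => 2*π*(k:ℝ)) (n := N) (f := fun s => |Φ₁ s - φ₁ * s / T|)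
    (μ := volume) hints
  simp only [hcast, Nat.cast_zero, mul_zero] at hsum1
  have hblock : ∀ k : ℕ, k < N →
      abs ((∫ s in (2*π*(k:ℝ))..(2*π*(k:ℝ)+2*π), |Φ₁ s - φ₁ * s / T|) - g (2*π*(k:ℝ)/T))
        ≤ 2*π*(|φ₁| * (2*π/T)) := by
    intro k hk
    have hsub := intervalIntegral.integral_comp_add_right
      (a := 0) (b := 2*π) (fun s => |Φ₁ s - φ₁ * s / T|) (2*π*(k:ℝ))
    rw [zero_add, add_comm (2*π) (2*π*(k:ℝ))] at hsub
    rw [← hsub]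
    have hcong : ∀ x ∈ Set.uIcc (0:ℝ) (2*π),
        (fun x => |Φ₁ (x + 2*π*(k:ℝ)) - φ₁ * (x + 2*π*(k:ℝ)) / T|) x
          = (fun x => |Φ₁ x - φ₁ * (x + 2*π*(k:ℝ)) / T|) x := by
      intro x _
      have h14 := (hper'.nat_mul k) x
      rw [show (k:ℝ)*(2*π) = 2*π*(k:ℝ) by ring] at h14
      simp only [h14]
    rw [intervalIntegral.integral_congr hcong]
    have hi1 : IntervalIntegrable (fun x => |Φ₁ x - φ₁ * (x + 2*π*(k:ℝ)) / T|) volume 0 (2*π) :=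
      (hΦ0.sub (Continuous.intervalIntegrable (by fun_prop) _ _)).abs
    have hdiff : (∫ x in (0:ℝ)..(2*π), |Φ₁ x - φ₁ * (x + 2*π*(k:ℝ)) / T|) - g (2*π*(k:ℝ)/T)
        = ∫ x in (0:ℝ)..(2*π),
            (|Φ₁ x - φ₁ * (x + 2*π*(k:ℝ)) / T| - |Φ₁ x - φ₁ * (2*π*(k:ℝ)/T)|) :=
      (intervalIntegral.integral_sub hi1 (hgi _)).symm
    rw [hdiff, ← Real.norm_eq_abs]
    refine (intervalIntegral.norm_integral_le_of_norm_le_const (C := |φ₁| * (2*π/T)) ?_).trans (le_of_eq ?_)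
    · intro x hx
      rw [Set.uIoc_of_le hπ.le] at hx
      rw [Real.norm_eq_abs]
      have h15 := abs_abs_sub_abs_le_abs_sub (Φ₁ x - φ₁ * (x + 2*π*(k:ℝ)) / T)
        (Φ₁ x - φ₁ * (2*π*(k:ℝ)/T))
      have h16 : Φ₁ x - φ₁ * (x + 2*π*(k:ℝ)) / T - (Φ₁ x - φ₁ * (2*π*(k:ℝ)/T))
          = -(φ₁ * x / T) := by field_simp; ring
      rw [h16, abs_neg, abs_div, abs_mul, abs_of_pos hT0] at h15
      refine h15.trans ?_
      rw [div_le_iff₀ hT0]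
      have hx2 : |x| ≤ 2*π := by rw [abs_of_pos hx.1]; exact hx.2
      calc |φ₁| * |x| ≤ |φ₁| * (2*π) := by nlinarith [abs_nonneg φ₁, abs_nonneg x]
      _ = |φ₁| * (2*π/T) * T := by field_simp
    · rw [sub_zero, abs_of_pos hπ]; ring
  have hSB : abs ((∫ s in (0:ℝ)..(2*π*(N:ℝ)), |Φ₁ s - φ₁ * s / T|)
      - ∑ k ∈ Finset.range N, g (2*π*(k:ℝ)/T)) ≤ 2*π*|φ₁| := by
    rw [← hsum1, ← Finset.sum_sub_distrib]
    refine (Finset.abs_sum_le_sum_abs _ _).trans ?_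
    calc ∑ k ∈ Finset.range N,
        abs ((∫ s in (2*π*(k:ℝ))..(2*π*(k:ℝ)+2*π), |Φ₁ s - φ₁ * s / T|) - g (2*π*(k:ℝ)/T))
        ≤ ∑ _k ∈ Finset.range N, 2*π*(|φ₁| * (2*π/T)) :=
          Finset.sum_le_sum (fun k hk => hblock k (Finset.mem_range.mp hk))
      _ = (N:ℝ) * (2*π*(|φ₁| * (2*π/T))) := by rw [Finset.sum_const, Finset.card_range]; ring
      _ ≤ 2*π*|φ₁| := by
          rw [show (N:ℝ) * (2*π*(|φ₁| * (2*π/T))) = (2*π*(N:ℝ)) * (2*π/T) * |φ₁| by ring]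
          have h17 : (2*π*(N:ℝ)) * (2*π/T) ≤ 2*π := by
            calc (2*π*(N:ℝ)) * (2*π/T) ≤ T * (2*π/T) :=
              mul_le_mul_of_nonneg_right hNT (by positivity)
            _ = 2*π := by field_simp
          nlinarith [abs_nonneg φ₁]
  have hτNle : 2*π*(N:ℝ)/T ≤ 1 := by rw [div_le_one hT0]; exact hNT
  have hsum2 := intervalIntegral.sum_integral_adjacent_intervals
    (a := fun k : ℕ => 2*π*(k:ℝ)/T) (n := N) (f := g) (μ := volume)
    (fun k _ => gCont.intervalIntegrable _ _)
  simp only [hcast, Nat.cast_zero, mul_zero, zero_div] at hsum2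
  have hτblock : ∀ k : ℕ, k < N →
      abs ((∫ τ in (2*π*(k:ℝ)/T)..((2*π*(k:ℝ)+2*π)/T), g τ) - (2*π/T) * g (2*π*(k:ℝ)/T))
        ≤ (2*π/T) * (2*π*|φ₁| * (2*π/T)) := by
    intro k hk
    set a := 2*π*(k:ℝ)/T with hadef
    set b := (2*π*(k:ℝ)+2*π)/T with hbdef
    have hba : b - a = 2*π/T := by rw [hadef, hbdef, div_sub_div_same]; congr 1; ring
    have hab : a ≤ b := by linarith [show (0:ℝ) < 2*π/T by positivity]
    have hconst : (2*π/T) * g a = ∫ _ in a..b, g a := by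
      rw [intervalIntegral.integral_const, smul_eq_mul, hba]
    rw [hconst, ← intervalIntegral.integral_sub (gCont.intervalIntegrable a b)
      intervalIntegrable_const, ← Real.norm_eq_abs]
    refine (intervalIntegral.norm_integral_le_of_norm_le_const
      (C := 2*π*|φ₁| * (2*π/T)) ?_).trans (le_of_eq ?_)
    · intro τ hτ
      rw [Set.uIoc_of_le hab] at hτ
      rw [Real.norm_eq_abs]
      refine (gLip τ a).trans ?_
      have h18 : |τ - a| ≤ 2*π/T := by
        rw [abs_of_nonneg (by linarith [hτ.1.le] : 0 ≤ τ - a)]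
        linarith [hτ.2]
      exact mul_le_mul_of_nonneg_left h18 (by positivity)
    · rw [hba, abs_of_pos (by positivity : (0:ℝ) < 2*π/T)]
      ring
  have hτtail : abs (∫ τ in (2*π*(N:ℝ)/T)..1, g τ)
      ≤ (2*π/T) * ((∫ x in (0:ℝ)..(2*π), |Φ₁ x|) + 2*π*|φ₁|) := by
    have hAnn : (0:ℝ) ≤ (∫ x in (0:ℝ)..(2*π), |Φ₁ x|) + 2*π*|φ₁| := by
      have := intervalIntegral.integral_nonneg (μ := volume) hπ.le (fun x _ => abs_nonneg (Φ₁ x))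
      positivity
    rw [← Real.norm_eq_abs]
    refine (intervalIntegral.norm_integral_le_of_norm_le_const
      (C := (∫ x in (0:ℝ)..(2*π), |Φ₁ x|) + 2*π*|φ₁|) ?_).trans ?_
    · intro τ hτ
      rw [Set.uIoc_of_le hτNle] at hτ
      rw [Real.norm_eq_abs, abs_of_nonneg (gNonneg τ)]
      exact gBound τ (le_trans (by positivity) hτ.1.le) hτ.2
    · have h19 : |1 - 2*π*(N:ℝ)/T| ≤ 2*π/T := by
        have hx : (1:ℝ) ≤ (2*π*(N:ℝ)+2*π)/T := by
          rw [le_div_iff₀ hT0, one_mul]; exact hTle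
        have hy : 2*π*(N:ℝ)/T + 2*π/T = (2*π*(N:ℝ)+2*π)/T := by rw [← add_div]
        rw [abs_of_nonneg (by linarith : (0:ℝ) ≤ 1 - 2*π*(N:ℝ)/T)]
        linarith
      calc ((∫ x in (0:ℝ)..(2*π), |Φ₁ x|) + 2*π*|φ₁|) * |1 - 2*π*(N:ℝ)/T|
          ≤ ((∫ x in (0:ℝ)..(2*π), |Φ₁ x|) + 2*π*|φ₁|) * (2*π/T) :=
            mul_le_mul_of_nonneg_left h19 hAnn
        _ = (2*π/T) * ((∫ x in (0:ℝ)..(2*π), |Φ₁ x|) + 2*π*|φ₁|) := by ring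
  have hJsplit : (∫ τ in (0:ℝ)..1, g τ)
      = (∫ τ in (0:ℝ)..(2*π*(N:ℝ)/T), g τ) + ∫ τ in (2*π*(N:ℝ)/T)..1, g τ :=
    (intervalIntegral.integral_add_adjacent_intervals (gCont.intervalIntegrable _ _)
      (gCont.intervalIntegrable _ _)).symm
  have hSC : abs ((∫ τ in (0:ℝ)..1, g τ)
      - (2*π/T) * ∑ k ∈ Finset.range N, g (2*π*(k:ℝ)/T))
      ≤ (2*π/T) * ((∫ x in (0:ℝ)..(2*π), |Φ₁ x|) + 2*π*|φ₁| + 2*π*|φ₁|) := by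
    rw [hJsplit, ← hsum2, Finset.mul_sum, add_sub_right_comm, ← Finset.sum_sub_distrib]
    refine (abs_add_le _ _).trans ?_
    have h20 : abs (∑ k ∈ Finset.range N,
        ((∫ τ in (2*π*(k:ℝ)/T)..((2*π*(k:ℝ)+2*π)/T), g τ) - (2*π/T) * g (2*π*(k:ℝ)/T)))
        ≤ (2*π/T) * (2*π*|φ₁|) := by
      refine (Finset.abs_sum_le_sum_abs _ _).trans ?_
      calc ∑ k ∈ Finset.range N,
          abs ((∫ τ in (2*π*(k:ℝ)/T)..((2*π*(k:ℝ)+2*π)/T), g τ) - (2*π/T) * g (2*π*(k:ℝ)/T))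
          ≤ ∑ _k ∈ Finset.range N, (2*π/T) * (2*π*|φ₁| * (2*π/T)) :=
            Finset.sum_le_sum (fun k hk => hτblock k (Finset.mem_range.mp hk))
        _ = (N:ℝ) * ((2*π/T) * (2*π*|φ₁| * (2*π/T))) := by
            rw [Finset.sum_const, Finset.card_range]; ring
        _ ≤ (2*π/T) * (2*π*|φ₁|) := by
            have h21 : (N:ℝ) * (2*π/T) ≤ 1 := by
              rw [show (N:ℝ) * (2*π/T) = 2*π*(N:ℝ)/T by ring]
              exact hτNle
            have h22 : (0:ℝ) ≤ 2*π*|φ₁| * (2*π/T) := by positivity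
            calc (N:ℝ) * ((2*π/T) * (2*π*|φ₁| * (2*π/T)))
                = ((N:ℝ) * (2*π/T)) * (2*π*|φ₁| * (2*π/T)) := by ring
              _ ≤ 1 * (2*π*|φ₁| * (2*π/T)) := mul_le_mul_of_nonneg_right h21 h22
              _ = (2*π/T) * (2*π*|φ₁|) := by ring
    refine (add_le_add h20 hτtail).trans (le_of_eq (by ring))
  have hFint1 : IntervalIntegrable (fun s => |Φ₁ s - φ₁ * s / T|) volume 0 (2*π*(N:ℝ)) :=
    hFi 0 (2*π*(N:ℝ)) le_rfl hA0 (by nlinarith)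
  have hItot : (∫ s in (0:ℝ)..T, |Φ₁ s - φ₁ * s / T|)
      = (∫ s in (0:ℝ)..(2*π*(N:ℝ)), |Φ₁ s - φ₁ * s / T|)
        + ∫ s in (2*π*(N:ℝ))..T, |Φ₁ s - φ₁ * s / T| :=
    (intervalIntegral.integral_add_adjacent_intervals hFint1 hFint2).symm
  have hAnn2 : 0 ≤ ∫ x in (0:ℝ)..(2*π), |Φ₁ x| :=
    intervalIntegral.integral_nonneg (μ := volume) hπ.le (fun x _ => abs_nonneg _)
  have final : ∀ I1 I2 S J A B : ℝ, |I2| ≤ A + B → |I1 - S| ≤ B →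
      |J - (2*π/T)*S| ≤ (2*π/T)*(A+B+B) → 0 ≤ A → 0 ≤ B →
      |(1/T)*(I1+I2) - (1/(2*π))*J| ≤ (5/T)*(A+B) := by
    intro I1 I2 S J A B h1 h2 h3 hA hB
    have e : (1/T)*(I1+I2) - (1/(2*π))*J
        = (1/T)*I2 + (1/T)*(I1 - S) + (1/(2*π))*((2*π/T)*S - J) := by
      field_simp
      ring
    rw [e]
    have b1 : |(1/T)*I2| ≤ (1/T)*(A+B) := by
      rw [abs_mul, abs_of_pos (by positivity : (0:ℝ) < 1/T)]
      exact mul_le_mul_of_nonneg_left h1 (by positivity)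
    have b2 : |(1/T)*(I1-S)| ≤ (1/T)*B := by
      rw [abs_mul, abs_of_pos (by positivity : (0:ℝ) < 1/T)]
      exact mul_le_mul_of_nonneg_left h2 (by positivity)
    have b3 : |(1/(2*π))*((2*π/T)*S - J)| ≤ (1/(2*π))*((2*π/T)*(A+B+B)) := by
      rw [abs_mul, abs_of_pos (by positivity : (0:ℝ) < 1/(2*π)), abs_sub_comm]
      exact mul_le_mul_of_nonneg_left h3 (by positivity)
    calc |(1/T)*I2 + (1/T)*(I1 - S) + (1/(2*π))*((2*π/T)*S - J)|
        ≤ |(1/T)*I2 + (1/T)*(I1 - S)| + |(1/(2*π))*((2*π/T)*S - J)| := abs_add_le _ _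
      _ ≤ (|(1/T)*I2| + |(1/T)*(I1 - S)|) + |(1/(2*π))*((2*π/T)*S - J)| :=
          add_le_add_left (abs_add_le _ _) _
      _ ≤ ((1/T)*(A+B) + (1/T)*B) + (1/(2*π))*((2*π/T)*(A+B+B)) :=
          add_le_add (add_le_add b1 b2) b3
      _ ≤ (5/T)*(A+B) := by
          have e2 : ((1/T)*(A+B) + (1/T)*B) + (1/(2*π))*((2*π/T)*(A+B+B)) = (2*A+4*B)/T := by
            field_simp
            ring
          rw [e2, show (5/T)*(A+B) = (5*(A+B))/T by ring, div_le_div_iff₀ hT0 hT0]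
          nlinarith [mul_nonneg (by linarith : (0:ℝ) ≤ 3*A+B) hT0.le]
  rw [hItot]
  exact final _ _ _ _ _ _ hsA hSB hSC hAnn2 (by positivity)
end
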